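/- arXiv:1603.01821 — 5 statements merged into one kernel-verified Lean document; each statement's English description precedes it below -/
import Mathlib

section
/- Let μ ∈ ℝ and let x, y, q, e : I → ℝ be differentiable functions on a real interval I with y(t) > 0 for all t ∈ I, satisfying the extended system x'(t) = e(t)·μ·q(t), y'(t) = y(t)²·(x(t) − q(t)), q'(t) = q(t)·(x(t) − q(t)), e'(t) = 0. Then the function t ↦ q(t)·exp(1/y(t)) is constant on I. In particular, if q(t₀) = exp(−1/y(t₀)) for some t₀ ∈ I, then q(t) = exp(−1/y(t)) for all t ∈ I. -/
/-!
Both `y'/y²` and `q'/q` equal `x - q`, so `(1/y)' = -(x - q)` and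
`(q · exp (1/y))' = exp (1/y) · (q' - q · (x - q)) = 0`; a function with zero derivative on an
interval is constant. The invariant set
`q = exp (-1/y)` is the level set where this first integral equals `1`.
-/

open Real

theorem Convex.eq_of_hasDerivWithinAt_zero {E : Type*} [NormedAddCommGroup E] [NormedSpace ℝ E]
    {f : ℝ → E} {s : Set ℝ} (hs : Convex ℝ s)
    (hf : ∀ t ∈ s, HasDerivWithinAt f 0 s t) {a b : ℝ} (ha : a ∈ s) (hb : b ∈ s) :
    f a = f b := by
  have h := hs.norm_image_sub_le_of_norm_hasDerivWithin_le hf (C := 0) (by simp) hb ha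
  rw [zero_mul, norm_le_zero_iff, sub_eq_zero] at h
  exact h

theorem HasDerivWithinAt.one_div_of_eq_sq_mul {y : ℝ → ℝ} {s : Set ℝ} {t r : ℝ}
    (hy : HasDerivWithinAt y (y t ^ 2 * r) s t) (hyt : y t ≠ 0) :
    HasDerivWithinAt (fun u ↦ 1 / y u) (-r) s t := by
  simp only [one_div]
  exact (hy.inv hyt).congr_deriv (by field_simp)

theorem HasDerivWithinAt.mul_exp_one_div_zero {q y : ℝ → ℝ} {s : Set ℝ} {t r : ℝ}
    (hq : HasDerivWithinAt q (q t * r) s t) (hy : HasDerivWithinAt y (y t ^ 2 * r) s t)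
    (hyt : y t ≠ 0) :
    HasDerivWithinAt (fun u ↦ q u * Real.exp (1 / y u)) 0 s t :=
  (hq.mul (hy.one_div_of_eq_sq_mul hyt).exp).congr_deriv (by ring)

theorem stmt0_general (I : Set ℝ) (hI : I.OrdConnected)
    (x y q : ℝ → ℝ)
    (hy : ∀ t ∈ I, 0 < y t)
    (hy' : ∀ t ∈ I, HasDerivWithinAt y ((y t) ^ 2 * (x t - q t)) I t)
    (hq' : ∀ t ∈ I, HasDerivWithinAt q (q t * (x t - q t)) I t) :
    (∀ s ∈ I, ∀ t ∈ I, q s * Real.exp (1 / y s) = q t * Real.exp (1 / y t)) ∧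
    (∀ t₀ ∈ I, q t₀ = Real.exp (-(1 / y t₀)) →
      ∀ t ∈ I, q t = Real.exp (-(1 / y t))) := by
  have hconst : ∀ s ∈ I, ∀ t ∈ I, q s * exp (1 / y s) = q t * exp (1 / y t) :=
    fun s hs t ht ↦ hI.convex.eq_of_hasDerivWithinAt_zero
      (fun u hu ↦ (hq' u hu).mul_exp_one_div_zero (hy' u hu) (hy u hu).ne') hs ht
  refine ⟨hconst, fun t₀ ht₀ hq₀ t ht ↦ ?_⟩
  have hlevel : q t * exp (1 / y t) = 1 := by
    rw [hconst t ht t₀ ht₀, hq₀, ← exp_add, neg_add_cancel, exp_zero]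
  rw [exp_neg]
  exact eq_inv_of_mul_eq_one_left hlevel

/-- Invariance of the set `Q = {q = exp(-1/y)}` for the extended model system
`x' = εμq, y' = y²(x-q), q' = q(x-q), ε' = 0`. -/
theorem stmt0 (μ : ℝ) (I : Set ℝ) (hI : I.OrdConnected)
    (x y q e : ℝ → ℝ)
    (hy : ∀ t ∈ I, 0 < y t)
    (hx' : ∀ t ∈ I, HasDerivWithinAt x (e t * μ * q t) I t)
    (hy' : ∀ t ∈ I, HasDerivWithinAt y ((y t) ^ 2 * (x t - q t)) I t)
    (hq' : ∀ t ∈ I, HasDerivWithinAt q (q t * (x t - q t)) I t)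
    (he' : ∀ t ∈ I, HasDerivWithinAt e 0 I t) :
    (∀ s ∈ I, ∀ t ∈ I, q s * Real.exp (1 / y s) = q t * Real.exp (1 / y t)) ∧
    (∀ t₀ ∈ I, q t₀ = Real.exp (-(1 / y t₀)) →
      ∀ t ∈ I, q t = Real.exp (-(1 / y t))) :=
  stmt0_general I hI x y q hy hy' hq'
end

section
/- Let ε > 0 and C ≥ 1. Then the function y : ℝ → ℝ given by y(x) = x² + (ε/2)·ln( √(π/(2ε)) · ( erf(√(2/ε)·x) + C ) ) is well-defined (the argument of the logarithm is strictly positive for all x) and satisfies the differential equation y'(x) = 2x + exp(−2·y(x)/ε) for every x ∈ ℝ. -/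
/-!
Writing `y = x² + (ε/2) log g`, one has `e^{-2y/ε} = e^{-2x²/ε} / g`, so the equation
`y' = 2x + e^{-2y/ε}` says exactly `(ε/2) g' = e^{-2x²/ε}`. For
`g = √(π/(2ε)) (erf(√(2/ε) x) + C)` this is the fundamental theorem of calculus, and `g > 0`
because `|erf| < 1`: by evenness this reduces to
`∫₀ᵘ e^{-s²} ds < ∫₀^∞ e^{-s²} ds = √π/2`.
-/

open Real

/-- The Gauss error function `erf(u) = (2/√π) ∫₀ᵘ e^{−s²} ds`. -/
noncomputable def erf (u : ℝ) : ℝ :=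
  (2 / Real.sqrt π) * ∫ s in (0:ℝ)..u, Real.exp (-s ^ 2)

open MeasureTheory Set

theorem setIntegral_Ioi_pos {f : ℝ → ℝ} {b : ℝ} (hf : IntegrableOn f (Ioi b))
    (hpos : ∀ x ∈ Ioi b, 0 < f x) : 0 < ∫ x in Ioi b, f x := by
  refine (setIntegral_pos_iff_support_of_nonneg_ae
    ((ae_restrict_iff' measurableSet_Ioi).2 (.of_forall fun x hx => (hpos x hx).le)) hf).2 ?_
  rw [inter_eq_right.2 fun x hx => Function.mem_support.2 (hpos x hx).ne', Real.volume_Ioi]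
  exact ENNReal.zero_lt_top

theorem intervalIntegral_lt_integral_Ioi {f : ℝ → ℝ} {a b : ℝ} (hf : Integrable f)
    (hpos : ∀ x ∈ Ioi b, 0 < f x) : ∫ x in a..b, f x < ∫ x in Ioi a, f x := by
  rw [← intervalIntegral.integral_interval_add_Ioi hf.integrableOn hf.integrableOn]
  exact lt_add_of_pos_right _ (setIntegral_Ioi_pos hf.integrableOn hpos)

theorem integrable_exp_neg_sq : Integrable fun s : ℝ => exp (-s ^ 2) := by
  simpa using integrable_exp_neg_mul_sq one_pos

theorem integral_Ioi_exp_neg_sq : ∫ s in Ioi (0 : ℝ), exp (-s ^ 2) = √π / 2 := by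
  simpa using integral_gaussian_Ioi 1

theorem intervalIntegral_exp_neg_sq_lt (u : ℝ) :
    ∫ s in (0 : ℝ)..u, exp (-s ^ 2) < √π / 2 :=
  integral_Ioi_exp_neg_sq ▸
    intervalIntegral_lt_integral_Ioi integrable_exp_neg_sq fun _ _ => exp_pos _

theorem intervalIntegral_exp_neg_sq_neg (u : ℝ) :
    ∫ s in (0 : ℝ)..-u, exp (-s ^ 2) = -∫ s in (0 : ℝ)..u, exp (-s ^ 2) := by
  have h := intervalIntegral.integral_comp_neg (a := 0) (b := u) fun s => exp (-s ^ 2)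
  simp only [neg_sq, neg_zero] at h
  rw [h, intervalIntegral.integral_symm (-u)]

theorem abs_erf_lt_one (u : ℝ) : |erf u| < 1 := by
  have hπ : 0 < √π := sqrt_pos.2 pi_pos
  have hlt := intervalIntegral_exp_neg_sq_lt u
  have hgt := intervalIntegral_exp_neg_sq_lt (-u)
  rw [intervalIntegral_exp_neg_sq_neg] at hgt
  rw [erf, abs_mul, abs_of_pos (by positivity), ← lt_div_iff₀' (by positivity), abs_lt]
  constructor <;> field_simp <;> linarith

theorem hasDerivAt_erf (u : ℝ) : HasDerivAt erf (2 / √π * exp (-u ^ 2)) u := by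
  refine (intervalIntegral.integral_hasDerivAt_right
    integrable_exp_neg_sq.intervalIntegrable ?_ (by fun_prop)).const_mul _
  exact (Continuous.stronglyMeasurable (by fun_prop)).stronglyMeasurableAtFilter

theorem hasDerivAt_erf_mul (c x : ℝ) :
    HasDerivAt (fun x => erf (c * x)) (2 / √π * exp (-(c * x) ^ 2) * c) x := by
  simpa [Function.comp_def] using
    (hasDerivAt_erf (c * x)).comp x ((hasDerivAt_id x).const_mul c)

theorem exp_neg_two_mul_add_log_div {ε g : ℝ} (hε : ε ≠ 0) (hg : 0 < g) (t : ℝ) :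
    exp (-(2 * (t + ε / 2 * log g)) / ε) = exp (-(2 / ε * t)) / g := by
  rw [show -(2 * (t + ε / 2 * log g)) / ε = -(2 / ε * t) + -log g by field_simp; ring,
    exp_add, exp_neg (log g), exp_log hg, ← div_eq_mul_inv]

theorem sqrt_pi_div_two_mul_mul_sqrt_two_div {ε : ℝ} (hε : 0 < ε) :
    √(π / (2 * ε)) * √(2 / ε) = √π / ε := by
  rw [← sqrt_mul (by positivity), show π / (2 * ε) * (2 / ε) = π / ε ^ 2 by field_simp,
    sqrt_div pi_pos.le, sqrt_sq hε.le]

/-- For `ε > 0` and `C ≥ 1`, the function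
`y(x) = x² + (ε/2)·ln(√(π/(2ε))·(erf(√(2/ε)x) + C))` is well-defined (the argument of
the logarithm is positive) and solves `y'(x) = 2x + exp(−2y(x)/ε)`. -/
theorem stmt3 (ε C : ℝ) (hε : 0 < ε) (hC : 1 ≤ C) :
    (∀ x : ℝ, 0 < Real.sqrt (π / (2 * ε)) * (erf (Real.sqrt (2 / ε) * x) + C)) ∧
    (∀ x : ℝ,
      HasDerivAt
        (fun x : ℝ => x ^ 2 +
          ε / 2 * Real.log (Real.sqrt (π / (2 * ε)) * (erf (Real.sqrt (2 / ε) * x) + C)))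
        (2 * x + Real.exp (-(2 * (x ^ 2 +
          ε / 2 * Real.log (Real.sqrt (π / (2 * ε)) * (erf (Real.sqrt (2 / ε) * x) + C)))) / ε))
        x) := by
  set c := √(2 / ε)
  set A := √(π / (2 * ε))
  have hpos (x : ℝ) : 0 < A * (erf (c * x) + C) :=
    mul_pos (sqrt_pos.2 (by positivity))
      (by linarith [neg_abs_le (erf (c * x)), abs_erf_lt_one (c * x)])
  refine ⟨hpos, fun x => ?_⟩
  have hc2 : c ^ 2 = 2 / ε := sq_sqrt (by positivity)
  have hAc : A * c = √π / ε := sqrt_pi_div_two_mul_mul_sqrt_two_div hε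
  have hscale (E : ℝ) : ε / 2 * (A * (2 / √π * E * c)) = E := by
    rw [show ε / 2 * (A * (2 / √π * E * c)) = ε * (A * c) / √π * E by ring, hAc]
    field_simp [(sqrt_pos.2 pi_pos).ne']
  refine ((hasDerivAt_pow 2 x).add
    ((((hasDerivAt_erf_mul c x).add_const C).const_mul A).log (hpos x).ne' |>.const_mul (ε / 2))
    ).congr_deriv ?_
  rw [exp_neg_two_mul_add_log_div hε.ne' (hpos x), mul_pow, hc2, mul_div_assoc', hscale]
  norm_num
end

section
/- For ε > 0 define S₃(ε) = √(2π/ε)·e^{2/ε}·(1 − erf(√(2/ε))), and for q ≥ 0, ε > 0 define W(q, ε) = −(1/2)·ln( 1 + (q/2)·S₃(ε) ). Then S₃(ε) > 0, W is well-defined and smooth, and for all q ≥ 0 and ε > 0 the partial differential identity (∂W/∂q)(q,ε) · ( −q·(2(2+q) + ε) ) + (∂W/∂ε)(q,ε) · ( −2ε² ) = q holds. -/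
open Real

/-- The Fenichel normal-form coefficient `S₃(ε) = √(2π/ε)·e^{2/ε}·(1 − erf(√(2/ε)))`. -/
noncomputable def S₃ (ε : ℝ) : ℝ :=
  Real.sqrt (2 * π / ε) * Real.exp (2 / ε) * (1 - erf (Real.sqrt (2 / ε)))

/-- The fiber-straightening function `W(q, ε) = −(1/2)·ln(1 + (q/2)·S₃(ε))`. -/
noncomputable def W (q ε : ℝ) : ℝ := -(1 / 2) * Real.log (1 + q / 2 * S₃ ε)

namespace ErfAux

open MeasureTheory intervalIntegral FormalMultilinearSeries Set Nat
open scoped ENNReal NNReal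

/-- The antiderivative `F(u) = ∫₀ᵘ e^{−s²} ds`. -/
noncomputable def F (u : ℝ) : ℝ := ∫ s in (0:ℝ)..u, Real.exp (-s ^ 2)

lemma contG : Continuous fun s : ℝ => Real.exp (-s ^ 2) := by fun_prop

lemma exp_hasSum (x : ℝ) : HasSum (fun n : ℕ => x ^ n / n !) (Real.exp x) := by
  rw [Real.exp_eq_exp_ℝ]; exact NormedSpace.expSeries_div_hasSum_exp x

lemma exp_neg_sq_hasSum (s : ℝ) :
    HasSum (fun n : ℕ => (-1 : ℝ) ^ n * s ^ (2 * n) / n !) (Real.exp (-s ^ 2)) := by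
  refine (exp_hasSum (-s ^ 2)).congr_fun fun n => ?_
  rw [neg_pow (s ^ 2), ← pow_mul]

lemma summable_aux (y : ℝ) :
    Summable (fun n : ℕ => |y| ^ (2 * n + 1) / ((n ! : ℝ) * (2 * n + 1))) := by
  refine Summable.of_nonneg_of_le (fun n => by positivity) (fun n => ?_)
    ((Real.summable_pow_div_factorial (y ^ 2)).mul_left |y|)
  have h1 : |y| ^ (2 * n + 1) = |y| * (y ^ 2) ^ n := by
    rw [pow_succ, pow_mul, sq_abs]; ring
  have h2 : |y| * ((y ^ 2) ^ n / n !) = |y| ^ (2 * n + 1) / (n ! : ℝ) := by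
    rw [h1]; ring
  rw [h2]
  have hfac : (0:ℝ) < (n ! : ℝ) := by exact_mod_cast Nat.factorial_pos n
  have hle : (n ! : ℝ) ≤ (n ! : ℝ) * (2 * n + 1) := by nlinarith [(Nat.cast_nonneg n : (0:ℝ) ≤ n)]
  exact div_le_div_of_nonneg_left (by positivity) hfac hle

lemma norm_term (y : ℝ) (n : ℕ) :
    ‖(-1 : ℝ) ^ n / ((n ! : ℝ) * (2 * n + 1)) * y ^ (2 * n + 1)‖
      = |y| ^ (2 * n + 1) / ((n ! : ℝ) * (2 * n + 1)) := by
  have hd : (0:ℝ) < (n ! : ℝ) * (2 * n + 1) := by positivity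
  rw [Real.norm_eq_abs, abs_mul, abs_div, abs_pow, abs_pow, abs_neg, abs_one, one_pow,
    abs_of_pos hd]
  ring

lemma summable_term {y : ℝ} :
    Summable (fun n : ℕ => (-1 : ℝ) ^ n / ((n ! : ℝ) * (2 * n + 1)) * y ^ (2 * n + 1)) := by
  refine Summable.of_norm_bounded (summable_aux y) (fun n => le_of_eq (norm_term y n))

lemma hasSum_F_nonneg {y : ℝ} (hy : 0 ≤ y) :
    HasSum (fun n : ℕ => (-1 : ℝ) ^ n / ((n ! : ℝ) * (2 * n + 1)) * y ^ (2 * n + 1)) (F y) := by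
  have hsumm := summable_term (y := y)
  have hmeas : ∀ n : ℕ, AEStronglyMeasurable (fun s : ℝ => (-1 : ℝ) ^ n * s ^ (2 * n) / n !)
      (volume.restrict (Ioc 0 y)) := by
    intro n
    exact (Continuous.aestronglyMeasurable (by fun_prop))
  have hfin : (∑' n : ℕ, ∫⁻ s in Ioc (0:ℝ) y, ‖(-1 : ℝ) ^ n * s ^ (2 * n) / n !‖₊ ∂volume) ≠ ⊤ := by
    have hb : ∀ n : ℕ, (∫⁻ s in Ioc (0:ℝ) y, ‖(-1 : ℝ) ^ n * s ^ (2 * n) / n !‖₊ ∂volume)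
        ≤ (‖y ^ (2 * n) / (n ! : ℝ)‖₊ : ℝ≥0∞) * ENNReal.ofReal y := by
      intro n
      calc (∫⁻ s in Ioc (0:ℝ) y, ‖(-1 : ℝ) ^ n * s ^ (2 * n) / n !‖₊ ∂volume)
          ≤ ∫⁻ _ in Ioc (0:ℝ) y, (‖y ^ (2 * n) / (n ! : ℝ)‖₊ : ℝ≥0∞) ∂volume := by
            refine setLIntegral_mono_ae' measurableSet_Ioc (Filter.Eventually.of_forall ?_)
            intro s hs
            rw [ENNReal.coe_le_coe]
            have : ‖(-1 : ℝ) ^ n * s ^ (2 * n) / (n ! : ℝ)‖ ≤ ‖y ^ (2 * n) / (n ! : ℝ)‖ := by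
              rw [Real.norm_eq_abs, Real.norm_eq_abs, abs_div, abs_div, abs_mul, abs_pow,
                abs_pow, abs_neg, abs_one, one_pow, one_mul, abs_pow]
              gcongr
              · exact hs.1.le
              · exact hs.2
            exact_mod_cast this
        _ = (‖y ^ (2 * n) / (n ! : ℝ)‖₊ : ℝ≥0∞) * ENNReal.ofReal y := by
            rw [setLIntegral_const, Real.volume_Ioc, sub_zero]
    refine ne_top_of_le_ne_top ?_ ((ENNReal.tsum_le_tsum hb).trans_eq ENNReal.tsum_mul_right)
    have hs : (∑' n : ℕ, (‖y ^ (2 * n) / (n ! : ℝ)‖₊ : ℝ≥0∞)) ≠ ⊤ := by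
      rw [ENNReal.tsum_coe_ne_top_iff_summable, ← NNReal.summable_coe]
      simp only [coe_nnnorm, Real.norm_eq_abs]
      refine (Real.summable_pow_div_factorial (y ^ 2)).congr fun n => ?_
      rw [abs_div, abs_pow, abs_of_nonneg hy, abs_of_nonneg (Nat.cast_nonneg _), ← pow_mul]
    exact ENNReal.mul_ne_top hs ENNReal.ofReal_ne_top
  have key : F y = ∑' n : ℕ, (-1 : ℝ) ^ n / ((n ! : ℝ) * (2 * n + 1)) * y ^ (2 * n + 1) := by
    have hpt : ∀ s : ℝ, Real.exp (-s ^ 2) = ∑' n : ℕ, (-1 : ℝ) ^ n * s ^ (2 * n) / n ! :=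
      fun s => (exp_neg_sq_hasSum s).tsum_eq.symm
    rw [F, intervalIntegral.integral_of_le hy]
    simp only [hpt]
    rw [MeasureTheory.integral_tsum hmeas hfin]
    congr 1
    funext n
    rw [← intervalIntegral.integral_of_le hy, intervalIntegral.integral_div,
      intervalIntegral.integral_const_mul, integral_pow]
    have : ((2 * n : ℕ) : ℝ) + 1 = 2 * (n : ℝ) + 1 := by push_cast; ring
    rw [this]
    have hne : (2 * (n:ℝ) + 1) ≠ 0 := by positivity
    have hne' : ((n !:ℝ)) ≠ 0 := by positivity
    field_simp
    all_goals try ring_nf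
    all_goals simp
  exact key ▸ hsumm.hasSum

/-- Coefficients of the power series of `F`. -/
noncomputable def a : ℕ → ℝ :=
  fun k => if k % 2 = 1 then (-1 : ℝ) ^ (k / 2) / (((k / 2)! : ℝ) * k) else 0

lemma a_odd (n : ℕ) : a (2 * n + 1) = (-1 : ℝ) ^ n / ((n ! : ℝ) * (2 * n + 1)) := by
  have h1 : (2 * n + 1) % 2 = 1 := by omega
  have h2 : (2 * n + 1) / 2 = n := by omega
  simp only [a, h1, h2, if_true]
  push_cast
  try ring

lemma a_even {k : ℕ} (hk : k % 2 = 0) : a k = 0 := by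
  simp [a, hk]

lemma hinj : Function.Injective (fun n : ℕ => 2 * n + 1) := by
  intro m n h
  simp only [] at h
  omega

lemma not_range {k : ℕ} (hk : k ∉ Set.range (fun n : ℕ => 2 * n + 1)) : k % 2 = 0 := by
  by_contra h
  refine hk ⟨k / 2, ?_⟩
  show 2 * (k / 2) + 1 = k
  omega

lemma hasSum_full_nonneg {z : ℝ} (hz : 0 ≤ z) : HasSum (fun k : ℕ => a k * z ^ k) (F z) := by
  rw [← Function.Injective.hasSum_iff hinj (fun k hk => by rw [a_even (not_range hk), zero_mul])]
  refine (hasSum_F_nonneg hz).congr_fun fun n => ?_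
  simp only [Function.comp, a_odd]


lemma hasSum_full (y : ℝ) : HasSum (fun k : ℕ => a k * y ^ k) (F y) := by
  rcases le_or_gt 0 y with hy | hy
  · exact hasSum_full_nonneg hy
  · have hy' : 0 ≤ -y := by linarith
    have hF : F y = -F (-y) := by
      rw [F, F]
      have : (∫ s in (0:ℝ)..(-y), Real.exp (-s ^ 2)) = ∫ s in (0:ℝ)..(-y), Real.exp (-(-s) ^ 2) := by
        congr 1; funext s; rw [neg_pow]; ring_nf
      rw [this, intervalIntegral.integral_comp_neg (fun s => Real.exp (-s ^ 2))]
      rw [neg_neg, neg_zero, intervalIntegral.integral_symm]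
    have h1 := (hasSum_F_nonneg hy').mul_left (-1 : ℝ)
    rw [hF]
    have h2 : ∀ k : ℕ, a k * y ^ k = -(a k * (-y) ^ k) := by
      intro k
      rcases Nat.even_or_odd k with he | ho
      · rw [a_even (Nat.even_iff.mp he)]; ring
      · rw [Odd.neg_pow ho]; ring
    rw [show (fun k : ℕ => a k * y ^ k) = fun k => -(a k * (-y) ^ k) from funext h2]
    exact (hasSum_full_nonneg hy').neg

lemma radius_top : (FormalMultilinearSeries.ofScalars ℝ a).radius = ⊤ := by
  refine ENNReal.eq_top_of_forall_nnreal_le fun r => ?_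
  refine FormalMultilinearSeries.le_radius_of_summable _ ?_
  have heq : ∀ k, ‖FormalMultilinearSeries.ofScalars ℝ a k‖ * (r : ℝ) ^ k = ‖a k‖ * (r:ℝ) ^ k :=
    fun k => by rw [FormalMultilinearSeries.ofScalars_norm]
  rw [show (fun k => ‖FormalMultilinearSeries.ofScalars ℝ a k‖ * (r : ℝ) ^ k)
      = fun k => ‖a k‖ * (r:ℝ) ^ k from funext heq]
  rw [← Function.Injective.summable_iff hinj
    (fun k hk => by rw [a_even (not_range hk), norm_zero, zero_mul])]
  refine Summable.of_nonneg_of_le (fun n => by simp only [Function.comp]; positivity) (fun n => ?_)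
    ((Real.summable_pow_div_factorial ((r:ℝ) ^ 2)).mul_left (r:ℝ))
  simp only [Function.comp, a_odd]
  have hfac : (0:ℝ) < (n ! : ℝ) := by exact_mod_cast Nat.factorial_pos n
  have hd : (0:ℝ) < (n ! : ℝ) * (2 * (n:ℝ) + 1) := by positivity
  have h1 : ‖(-1 : ℝ) ^ n / ((n ! : ℝ) * (2 * (n:ℝ) + 1))‖ = 1 / ((n ! : ℝ) * (2 * (n:ℝ) + 1)) := by
    rw [norm_div, norm_pow, norm_neg, norm_one, one_pow, Real.norm_eq_abs, abs_of_pos hd]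
  rw [h1]
  have hr : (0:ℝ) ≤ r := r.coe_nonneg
  have h2 : (r:ℝ) ^ (2 * n + 1) = ((r:ℝ) ^ 2) ^ n * r := by
    rw [pow_succ, pow_mul]
  calc 1 / ((n ! : ℝ) * (2 * (n:ℝ) + 1)) * (r:ℝ) ^ (2 * n + 1)
      ≤ 1 / (n ! : ℝ) * (r:ℝ) ^ (2 * n + 1) := by
        have hle : (n ! : ℝ) ≤ (n ! : ℝ) * (2 * n + 1) := by
          nlinarith [(Nat.cast_nonneg n : (0:ℝ) ≤ n)]
        exact mul_le_mul_of_nonneg_right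
          (div_le_div_of_nonneg_left (by norm_num) hfac hle) (by positivity)
    _ = (r:ℝ) * (((r:ℝ) ^ 2) ^ n / n !) := by rw [h2]; ring

lemma hasFPower : HasFPowerSeriesOnBall F (FormalMultilinearSeries.ofScalars ℝ a) 0 ⊤ := by
  refine ⟨radius_top ▸ le_rfl, by simp, fun {y} _ => ?_⟩
  simp only [FormalMultilinearSeries.ofScalars_apply_eq, smul_eq_mul, zero_add]
  exact hasSum_full y

lemma analyticAt_F (u : ℝ) : AnalyticAt ℝ F u :=
  hasFPower.analyticAt_of_mem (by simp)

lemma analyticAt_erf (u : ℝ) : AnalyticAt ℝ erf u := by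
  have : erf = fun v => (2 / Real.sqrt π) * F v := rfl
  rw [this]
  exact analyticAt_const.mul (analyticAt_F u)

lemma hasDerivAt_F (u : ℝ) : HasDerivAt F (Real.exp (-u ^ 2)) u :=
  (contG.integral_hasStrictDerivAt 0 u).hasDerivAt

lemma hasDerivAt_erf (u : ℝ) :
    HasDerivAt erf (2 / Real.sqrt π * Real.exp (-u ^ 2)) u := by
  have : erf = fun v => (2 / Real.sqrt π) * F v := rfl
  rw [this]
  simpa [mul_comm] using (hasDerivAt_F u).const_mul (2 / Real.sqrt π)

lemma erf_lt_one {u : ℝ} (hu : 0 < u) : erf u < 1 := by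
  have hint : IntegrableOn (fun s : ℝ => Real.exp (-s ^ 2)) (Ioi 0) := by
    have := (integrable_exp_neg_mul_sq (one_pos)).integrableOn (s := Ioi (0:ℝ))
    simpa using this
  have hIoi : (∫ s in Ioi (0:ℝ), Real.exp (-s ^ 2)) = Real.sqrt π / 2 := by
    have := integral_gaussian_Ioi 1
    simpa using this
  have hsplit : (∫ s in Ioc (0:ℝ) u, Real.exp (-s ^ 2)) + (∫ s in Ioi u, Real.exp (-s ^ 2))
      = ∫ s in Ioi (0:ℝ), Real.exp (-s ^ 2) := by
    rw [← MeasureTheory.setIntegral_union (Set.Ioc_disjoint_Ioi le_rfl) measurableSet_Ioi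
      (hint.mono_set Set.Ioc_subset_Ioi_self) (hint.mono_set (Set.Ioi_subset_Ioi hu.le)),
      Set.Ioc_union_Ioi_eq_Ioi hu.le]
  have hpos : 0 < ∫ s in Ioi u, Real.exp (-s ^ 2) := by
    refine (MeasureTheory.setIntegral_pos_iff_support_of_nonneg_ae ?_ ?_).mpr ?_
    · exact Filter.Eventually.of_forall fun s => (Real.exp_pos _).le
    · exact hint.mono_set (Set.Ioi_subset_Ioi hu.le)
    · have : (Function.support fun s : ℝ => Real.exp (-s ^ 2)) = Set.univ := by
        ext s; simp [Function.support, (Real.exp_pos (-s ^ 2)).ne']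
      rw [this, Set.univ_inter, Real.volume_Ioi]
      simp
  have hF : F u < Real.sqrt π / 2 := by
    rw [F, intervalIntegral.integral_of_le hu.le, ← hIoi, ← hsplit]
    linarith
  have hsπ : 0 < Real.sqrt π := Real.sqrt_pos.mpr Real.pi_pos
  have : erf u = 2 / Real.sqrt π * F u := rfl
  rw [this]
  calc 2 / Real.sqrt π * F u < 2 / Real.sqrt π * (Real.sqrt π / 2) := by
        exact mul_lt_mul_of_pos_left hF (by positivity)
    _ = 1 := by field_simp
  
end ErfAux

open ErfAux

lemma S₃_pos {ε : ℝ} (hε : 0 < ε) : 0 < S₃ ε := by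
  have h1 : 0 < Real.sqrt (2 * π / ε) :=
    Real.sqrt_pos.mpr (by positivity)
  have h2 : (0:ℝ) < Real.exp (2 / ε) := Real.exp_pos _
  have h3 : 0 < 1 - erf (Real.sqrt (2 / ε)) := by
    have := erf_lt_one (Real.sqrt_pos.mpr (by positivity : (0:ℝ) < 2 / ε))
    linarith
  exact mul_pos (mul_pos h1 h2) h3

lemma D_pos {q ε : ℝ} (hq : 0 ≤ q) (hε : 0 < ε) : 0 < 1 + q / 2 * S₃ ε := by
  have := S₃_pos hε
  nlinarith

lemma contDiffAt_S₃ {ε : ℝ} (hε : 0 < ε) : ContDiffAt ℝ (⊤ : ℕ∞) S₃ ε := by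
  have hinv : ContDiffAt ℝ (⊤ : ℕ∞) (fun x : ℝ => 2 / x) ε :=
    contDiffAt_const.div contDiffAt_id hε.ne'
  have hinv' : ContDiffAt ℝ (⊤ : ℕ∞) (fun x : ℝ => 2 * π / x) ε :=
    contDiffAt_const.div contDiffAt_id hε.ne'
  have h1 : ContDiffAt ℝ (⊤ : ℕ∞) (fun x : ℝ => Real.sqrt (2 * π / x)) ε :=
    (Real.contDiffAt_sqrt (by positivity : (2 * π / ε) ≠ 0)).comp ε hinv'
  have h2 : ContDiffAt ℝ (⊤ : ℕ∞) (fun x : ℝ => Real.exp (2 / x)) ε :=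
    Real.contDiff_exp.contDiffAt.comp ε hinv
  have h3 : ContDiffAt ℝ (⊤ : ℕ∞) (fun x : ℝ => 1 - erf (Real.sqrt (2 / x))) ε := by
    refine contDiffAt_const.sub ?_
    exact ((analyticAt_erf _).contDiffAt).comp ε
      ((Real.contDiffAt_sqrt (by positivity : (2 / ε) ≠ 0)).comp ε hinv)
  exact (h1.mul h2).mul h3

lemma hasDerivAt_S₃ {ε : ℝ} (hε : 0 < ε) :
    HasDerivAt S₃ (2 / ε ^ 2 - S₃ ε * (ε + 4) / (2 * ε ^ 2)) ε := by
  have hεne : ε ≠ 0 := hε.ne'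
  have h2π : (0:ℝ) < 2 * π / ε := by positivity
  have h2ε : (0:ℝ) < 2 / ε := by positivity
  have hinv : HasDerivAt (fun x : ℝ => x⁻¹) (-(ε ^ 2)⁻¹) ε := hasDerivAt_inv hεne
  have hA' : HasDerivAt (fun x : ℝ => 2 * π / x) (2 * π * -(ε ^ 2)⁻¹) ε := by
    simpa [div_eq_mul_inv] using hinv.const_mul (2 * π)
  have hB' : HasDerivAt (fun x : ℝ => 2 / x) (2 * -(ε ^ 2)⁻¹) ε := by
    simpa [div_eq_mul_inv] using hinv.const_mul (2:ℝ)
  have hsqrtA : HasDerivAt (fun x : ℝ => Real.sqrt (2 * π / x))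
      (2 * π * -(ε ^ 2)⁻¹ / (2 * Real.sqrt (2 * π / ε))) ε := hA'.sqrt h2π.ne'
  have hexp : HasDerivAt (fun x : ℝ => Real.exp (2 / x))
      (Real.exp (2 / ε) * (2 * -(ε ^ 2)⁻¹)) ε := hB'.exp
  have hsqrtB : HasDerivAt (fun x : ℝ => Real.sqrt (2 / x))
      (2 * -(ε ^ 2)⁻¹ / (2 * Real.sqrt (2 / ε))) ε := hB'.sqrt h2ε.ne'
  have herf : HasDerivAt (fun x : ℝ => erf (Real.sqrt (2 / x)))
      (2 / Real.sqrt π * Real.exp (-Real.sqrt (2 / ε) ^ 2)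
        * (2 * -(ε ^ 2)⁻¹ / (2 * Real.sqrt (2 / ε)))) ε := by
    have := (ErfAux.hasDerivAt_erf (Real.sqrt (2 / ε))).comp ε hsqrtB
    exact this
  have hprod := (hsqrtA.mul hexp).mul ((hasDerivAt_const ε (1:ℝ)).sub herf)
  have hfun : S₃ = fun x : ℝ =>
      Real.sqrt (2 * π / x) * Real.exp (2 / x) * (1 - erf (Real.sqrt (2 / x))) := rfl
  rw [hfun]
  convert hprod using 1
  · rfl
  · rfl
  · rfl
  -- algebraic identity between the two derivative expressions
  have hu2 : Real.sqrt (2 / ε) ^ 2 = 2 / ε := Real.sq_sqrt h2ε.le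
  have hA : Real.sqrt (2 * π / ε) = Real.sqrt π * Real.sqrt (2 / ε) := by
    rw [show 2 * π / ε = π * (2 / ε) by ring, Real.sqrt_mul Real.pi_pos.le]
  have hexpinv : Real.exp (-Real.sqrt (2 / ε) ^ 2) = (Real.exp (2 / ε))⁻¹ := by
    rw [hu2, Real.exp_neg]
  simp only [S₃, hexpinv, hA, Pi.mul_apply, Pi.sub_apply]
  set t := Real.sqrt π with ht
  set u := Real.sqrt (2 / ε) with huu
  set b := Real.exp (2 / ε) with hb
  have hππ : t * t = π := Real.mul_self_sqrt Real.pi_pos.le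
  have ht0 : 0 < t := Real.sqrt_pos.mpr Real.pi_pos
  have hu0 : 0 < u := Real.sqrt_pos.mpr h2ε
  have hb0 : 0 < b := Real.exp_pos _
  have hu2' : u ^ 2 * ε = 2 := by
    rw [hu2]; field_simp
  rw [← hππ]
  field_simp
  linear_combination (-(1 - erf u) * t * b) * hu2'

/-- `S₃(ε) > 0`, `W` is well-defined and smooth on `{q ≥ 0, ε > 0}`, and `W` satisfies
the partial differential identity
`(∂W/∂q)·(−q(2(2+q)+ε)) + (∂W/∂ε)·(−2ε²) = q`. -/
theorem stmt9 :
    (∀ ε : ℝ, 0 < ε → 0 < S₃ ε) ∧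
    (∀ q ε : ℝ, 0 ≤ q → 0 < ε → 0 < 1 + q / 2 * S₃ ε) ∧
    ContDiffOn ℝ (⊤ : ℕ∞) (fun p : ℝ × ℝ => W p.1 p.2) {p : ℝ × ℝ | 0 ≤ p.1 ∧ 0 < p.2} ∧
    (∀ q ε : ℝ, 0 ≤ q → 0 < ε →
      ∃ Wq Wε : ℝ,
        HasDerivAt (fun q' : ℝ => W q' ε) Wq q ∧
        HasDerivAt (fun ε' : ℝ => W q ε') Wε ε ∧
        Wq * (-(q * (2 * (2 + q) + ε))) + Wε * (-(2 * ε ^ 2)) = q) := by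
  refine ⟨fun ε hε => S₃_pos hε, fun q ε hq hε => D_pos hq hε, ?_, ?_⟩
  · intro p hp
    obtain ⟨hq, hε⟩ := hp
    refine ContDiffAt.contDiffWithinAt ?_
    have hD : (1 + p.1 / 2 * S₃ p.2) ≠ 0 := (D_pos hq hε).ne'
    have hinner : ContDiffAt ℝ (⊤ : ℕ∞) (fun p' : ℝ × ℝ => 1 + p'.1 / 2 * S₃ p'.2) p := by
      refine contDiffAt_const.add ?_
      exact ((contDiffAt_fst.div_const 2).mul ((contDiffAt_S₃ hε).comp p contDiffAt_snd))
    exact contDiffAt_const.mul (hinner.log hD)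
  · intro q ε hq hε
    have hD := D_pos hq hε
    have hS' := hasDerivAt_S₃ hε
    have hq' : HasDerivAt (fun q' : ℝ => 1 + q' / 2 * S₃ ε) (1 / 2 * S₃ ε) q :=
      (((hasDerivAt_id q).div_const 2).mul_const (S₃ ε)).const_add 1
    have hWq : HasDerivAt (fun q' : ℝ => W q' ε)
        (-(1/2) * (1 / 2 * S₃ ε / (1 + q / 2 * S₃ ε))) q := by
      have := (hq'.log hD.ne').const_mul (-(1/2) : ℝ)
      simpa [W] using this
    have hε' : HasDerivAt (fun ε' : ℝ => 1 + q / 2 * S₃ ε')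
        (q / 2 * (2 / ε ^ 2 - S₃ ε * (ε + 4) / (2 * ε ^ 2))) ε := by
      have := (hS'.const_mul (q / 2)).const_add 1
      simpa using this
    have hWε : HasDerivAt (fun ε' : ℝ => W q ε')
        (-(1/2) * (q / 2 * (2 / ε ^ 2 - S₃ ε * (ε + 4) / (2 * ε ^ 2)) / (1 + q / 2 * S₃ ε))) ε := by
      have := (hε'.log hD.ne').const_mul (-(1/2) : ℝ)
      simpa [W] using this
    refine ⟨_, _, hWq, hWε, ?_⟩
    have hεne : ε ≠ 0 := hε.ne'
    generalize hSv : S₃ ε = S at hD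
    set D := 1 + q / 2 * S with hDdef
    have hDne : D ≠ 0 := hD.ne'
    field_simp
    linear_combination (4 * q * ε ^ 2) * hDdef
end

section
/- Let ξ > 0, ν > 0 and 0 < ε < ν·e^{−4/ξ}, and set T = (1/4)·ln(ν/ε) − 1/ξ > 0. Suppose r, w, e : [0, T] → ℝ are differentiable with w(t) > 0 for all t, and satisfy r'(t) = −2·r(t), w'(t) = −w(t)², e'(t) = 4·e(t), with r(0) = e^{−2/ξ}, w(0) = ξ, e(0) = ε·e^{4/ξ}. Then r(T) = √(ε/ν), w(T) = 4/ln(ν/ε), and e(T) = ν. -/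
open Real Set

/- Each of the three equations integrates in closed form: `r(t) = r(0)e^{-2t}`, `e(t) = e(0)e^{4t}`
and, since `(1/w)' = 1`, `1/w(t) = 1/w(0) + t`. At `T = L/4 - 1/ξ` with `L = ln(ν/ε)` the initial
values on `Q₁` cancel the `1/ξ` terms and leave `r = e^{-L/2}`, `1/w = L/4`, `e = εe^{L}`;
`T > 0` is the hypothesis `ε < νe^{-4/ξ}` read as `L > 4/ξ`. -/

section ODE

variable {f : ℝ → ℝ} {a b : ℝ}

theorem eq_of_hasDerivWithinAt_Icc_zero
    (hf : ∀ t ∈ Icc a b, HasDerivWithinAt f 0 (Icc a b) t) :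
    ∀ t ∈ Icc a b, f t = f a :=
  constant_of_has_deriv_right_zero (fun t ht ↦ (hf t ht).continuousWithinAt) fun t ht ↦
    (hf t (Ico_subset_Icc_self ht)).mono_of_mem_nhdsWithin (Icc_mem_nhdsGE_of_mem ht)

theorem eq_mul_exp_of_hasDerivWithinAt_Icc_mul {c : ℝ}
    (hf : ∀ t ∈ Icc a b, HasDerivWithinAt f (c * f t) (Icc a b) t) :
    ∀ t ∈ Icc a b, f t = f a * exp (c * (t - a)) := by
  have hconst := eq_of_hasDerivWithinAt_Icc_zero (f := fun t ↦ f t * exp (-(c * (t - a))))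
    fun t ht ↦ by
      have hexp : HasDerivWithinAt (fun t ↦ exp (-(c * (t - a))))
          (exp (-(c * (t - a))) * -(c * 1)) (Icc a b) t :=
        (((hasDerivAt_id t).sub_const a).const_mul c).neg.exp.hasDerivWithinAt
      exact ((hf t ht).mul hexp).congr_deriv (by ring)
  intro t ht
  have h := hconst t ht
  simp only [sub_self, mul_zero, neg_zero, exp_zero, mul_one] at h
  rw [← h, mul_assoc, ← exp_add, neg_add_cancel, exp_zero, mul_one]

theorem inv_eq_inv_add_of_hasDerivWithinAt_Icc_neg_sq
    (hf0 : ∀ t ∈ Icc a b, f t ≠ 0)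
    (hf : ∀ t ∈ Icc a b, HasDerivWithinAt f (-f t ^ 2) (Icc a b) t) :
    ∀ t ∈ Icc a b, (f t)⁻¹ = (f a)⁻¹ + (t - a) := by
  have hconst := eq_of_hasDerivWithinAt_Icc_zero (f := fun t ↦ (f t)⁻¹ - t) fun t ht ↦
    (((hf t ht).inv (hf0 t ht)).sub (hasDerivWithinAt_id t _)).congr_deriv
      (by field_simp [hf0 t ht]; ring)
  intro t ht
  linarith [hconst t ht]

end ODE

theorem lt_log_div_of_lt_mul_exp_neg {c ν ε : ℝ} (hν : 0 < ν) (hε : 0 < ε)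
    (hεν : ε < ν * exp (-c)) : c < log (ν / ε) := by
  have h : log (ε / ν) < -c := by
    rw [log_lt_iff_lt_exp (div_pos hε hν), div_lt_iff₀ hν, mul_comm]
    exact hεν
  have hswap : log (ν / ε) = -log (ε / ν) := by rw [← log_inv, inv_div]
  linarith

theorem sqrt_div_eq_exp_neg_log_div {ν ε : ℝ} (hν : 0 < ν) (hε : 0 < ε) :
    √(ε / ν) = exp (-(log (ν / ε) / 2)) := by
  rw [← neg_div, ← log_inv, inv_div, exp_half, exp_log (div_pos hε hν)]

theorem stmt15_general (ξ ν ε T : ℝ) (hν : 0 < ν) (hε : 0 < ε)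
    (hεν : ε < ν * Real.exp (-(4 / ξ)))
    (hT : T = 1 / 4 * Real.log (ν / ε) - 1 / ξ)
    (r w e : ℝ → ℝ)
    (hw : ∀ t ∈ Set.Icc 0 T, 0 < w t)
    (hr' : ∀ t ∈ Set.Icc 0 T, HasDerivWithinAt r (-2 * r t) (Set.Icc 0 T) t)
    (hw' : ∀ t ∈ Set.Icc 0 T, HasDerivWithinAt w (-(w t) ^ 2) (Set.Icc 0 T) t)
    (he' : ∀ t ∈ Set.Icc 0 T, HasDerivWithinAt e (4 * e t) (Set.Icc 0 T) t)
    (hr0 : r 0 = Real.exp (-(2 / ξ))) (hw0 : w 0 = ξ) (he0 : e 0 = ε * Real.exp (4 / ξ)) :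
    0 < T ∧ r T = Real.sqrt (ε / ν) ∧ w T = 4 / Real.log (ν / ε) ∧ e T = ν := by
  have hL := lt_log_div_of_lt_mul_exp_neg hν hε hεν
  have hT0 : 0 < T := by
    have hquarter : 1 / ξ = 4 / ξ / 4 := by ring
    rw [hT, hquarter]
    linarith
  have hTmem : T ∈ Icc 0 T := right_mem_Icc.2 hT0.le
  have hrT := eq_mul_exp_of_hasDerivWithinAt_Icc_mul hr' T hTmem
  have hwT := inv_eq_inv_add_of_hasDerivWithinAt_Icc_neg_sq (fun t ht ↦ (hw t ht).ne') hw' T hTmem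
  have heT := eq_mul_exp_of_hasDerivWithinAt_Icc_mul he' T hTmem
  refine ⟨hT0, ?_, ?_, ?_⟩
  · rw [hrT, hr0, ← exp_add, sqrt_div_eq_exp_neg_log_div hν hε]
    congr 1
    rw [hT]
    ring
  · have hinv : (w T)⁻¹ = log (ν / ε) / 4 := by
      rw [hwT, hw0, hT]
      ring
    rw [← inv_inv (w T), hinv, inv_div]
  · rw [heT, he0, mul_assoc, ← exp_add]
    have hexponent : 4 / ξ + 4 * (T - 0) = log (ν / ε) := by
      rw [hT]
      ring
    rw [hexponent, exp_log (div_pos hν hε)]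
    field_simp

/-- Explicit integration of the reduced flow `r' = −2r, w' = −w², e' = 4e` on the center
manifold in the entry chart `κ₁` of the blowup for the tanh-regularized visible fold:
starting on `Q₁` (`r = e^{−2/ξ}`, `w = ξ`, `e = ε·e^{4/ξ}`), the exit at `{e = ν}` occurs
with `r = √(ε/ν)` and `w = 4/ln(ν/ε)`. -/
theorem stmt15 (ξ ν ε T : ℝ) (hξ : 0 < ξ) (hν : 0 < ν) (hε : 0 < ε)
    (hεν : ε < ν * Real.exp (-(4 / ξ)))
    (hT : T = 1 / 4 * Real.log (ν / ε) - 1 / ξ)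
    (r w e : ℝ → ℝ)
    (hw : ∀ t ∈ Set.Icc 0 T, 0 < w t)
    (hr' : ∀ t ∈ Set.Icc 0 T, HasDerivWithinAt r (-2 * r t) (Set.Icc 0 T) t)
    (hw' : ∀ t ∈ Set.Icc 0 T, HasDerivWithinAt w (-(w t) ^ 2) (Set.Icc 0 T) t)
    (he' : ∀ t ∈ Set.Icc 0 T, HasDerivWithinAt e (4 * e t) (Set.Icc 0 T) t)
    (hr0 : r 0 = Real.exp (-(2 / ξ))) (hw0 : w 0 = ξ) (he0 : e 0 = ε * Real.exp (4 / ξ)) :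
    0 < T ∧ r T = Real.sqrt (ε / ν) ∧ w T = 4 / Real.log (ν / ε) ∧ e T = ν :=
  stmt15_general ξ ν ε T hν hε hεν hT r w e hw hr' hw' he' hr0 hw0 he0
end

section
/- Let a ∈ ℝ, b > 0, and for y > 0 with 1 + a·y > 0 define h(y) = (1 + a·y)·e^{−b/y}. Define F : ℝ × (0,∞) → ℝ² by F(x, y) = ( y·x·(x − h(y)), y²·(x − h(y)) ). Then for every y > 0 with 1 + a·y > 0, the point (h(y), y) is a zero of F, and the Jacobian matrix of F at (h(y), y) has determinant 0 and trace equal to −b·e^{−b/y}·( 1 + (a − 1/b)·y ); in particular its eigenvalues are 0 and −b·e^{−b/y}·(1 + (a − b^{−1})·y). -/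
/-! Both components of `F` carry the factor `x − h(y)`, which vanishes on the critical manifold,
so there the Jacobian is the rank-one matrix `(yx, y²)ᵀ · (1, −h'(y))`. A rank-one matrix
`u vᵀ` has determinant `0` and its other eigenvalue is its trace `v ⬝ u`, with eigenvector `u`;
here that trace is `y h − y² h'`, which simplifies to `−b e^{−b/y} (1 + (a − 1/b) y)`. -/

open Real

/-- The critical-manifold graph `h(y) = (1 + ay)·e^{−b/y}` of the aircraft model. -/
noncomputable def h16 (a b y : ℝ) : ℝ := (1 + a * y) * Real.exp (-(b / y))

/-- The layer problem `F(x,y) = (yx(x − h(y)), y²(x − h(y)))` of the aircraft model. -/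
noncomputable def F16 (a b : ℝ) (p : ℝ × ℝ) : ℝ × ℝ :=
  (p.2 * p.1 * (p.1 - h16 a b p.2), p.2 ^ 2 * (p.1 - h16 a b p.2))

/-- The continuous linear map `ℝ × ℝ → ℝ` given by a row `(c, d)` of a Jacobian. -/
noncomputable def rowCLM (c d : ℝ) : ℝ × ℝ →L[ℝ] ℝ :=
  c • ContinuousLinearMap.fst ℝ ℝ ℝ + d • ContinuousLinearMap.snd ℝ ℝ ℝ

theorem HasFDerivAt.mul_of_right_eq_zero {𝕜 E : Type*} [NontriviallyNormedField 𝕜]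
    [NormedAddCommGroup E] [NormedSpace 𝕜 E] {u φ : E → 𝕜} {φ' : E →L[𝕜] 𝕜} {x : E}
    (hu : DifferentiableAt 𝕜 u x) (hφ : HasFDerivAt φ φ' x) (hφx : φ x = 0) :
    HasFDerivAt (fun p => u p * φ p) (u x • φ') x :=
  (hu.hasFDerivAt.mul hφ).congr_fderiv (by ext; simp [hφx])

theorem smul_rowCLM (k c d : ℝ) : k • rowCLM c d = rowCLM (k * c) (k * d) := by
  simp only [rowCLM, smul_add, smul_smul]

theorem hasFDerivAt_fst_sub_comp_snd {g : ℝ → ℝ} {g' : ℝ} {p : ℝ × ℝ}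
    (hg : HasDerivAt g g' p.2) :
    HasFDerivAt (fun q : ℝ × ℝ => q.1 - g q.2) (rowCLM 1 (-g')) p := by
  have h := (hasFDerivAt_fst (𝕜 := ℝ) (p := p)).sub (hg.comp_hasFDerivAt p hasFDerivAt_snd)
  exact h.congr_fderiv (by ext <;> simp [rowCLM])

theorem Matrix.hasEigenvalue_zero_of_det_eq_zero {K n : Type*} [Field K] [Fintype n]
    [DecidableEq n] {A : Matrix n n K} (hA : A.det = 0) :
    Module.End.HasEigenvalue (Matrix.mulVecLin A) 0 :=
  show Module.End.HasEigenvalue (Matrix.toLin' A) 0 from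
    ((LinearMap.hasEigenvalue_zero_tfae (Matrix.toLin' A)).out 0 3).mpr
      (by rwa [LinearMap.det_toLin'])

theorem Matrix.hasEigenvalue_vecMulVec {K n : Type*} [CommRing K] [Fintype n]
    {u : n → K} (hu : u ≠ 0) (v : n → K) :
    Module.End.HasEigenvalue (Matrix.mulVecLin (Matrix.vecMulVec u v)) (v ⬝ᵥ u) :=
  Module.End.hasEigenvalue_of_hasEigenvector
    ⟨Module.End.mem_eigenspace_iff.mpr (by simp [Matrix.vecMulVec_mulVec]), hu⟩

theorem hasDerivAt_h16 (a b : ℝ) {y : ℝ} (hy : y ≠ 0) :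
    HasDerivAt (h16 a b)
      (a * exp (-(b / y)) + (1 + a * y) * (exp (-(b / y)) * (b / y ^ 2))) y := by
  have hquot : HasDerivAt (fun t => -(b / t)) (b / y ^ 2) y := by
    simp only [div_eq_mul_inv]
    exact ((hasDerivAt_inv hy).const_mul b).neg.congr_deriv (by ring)
  exact (((hasDerivAt_id y).const_mul a).const_add 1).mul hquot.exp |>.congr_deriv (by simp)

theorem mul_h16_sub_sq_mul_deriv {a b y : ℝ} (hb : b ≠ 0) (hy : y ≠ 0) :
    y * h16 a b y - y ^ 2 * (a * exp (-(b / y)) + (1 + a * y) * (exp (-(b / y)) * (b / y ^ 2)))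
      = -b * exp (-(b / y)) * (1 + (a - 1 / b) * y) := by
  rw [h16]
  field_simp
  ring

theorem stmt16_general (a b : ℝ) (hb : 0 < b) (y : ℝ) (hy : 0 < y) :
    F16 a b (h16 a b y, y) = 0 ∧
    ∃ J : Matrix (Fin 2) (Fin 2) ℝ,
      HasFDerivAt (F16 a b)
        ((rowCLM (J 0 0) (J 0 1)).prod (rowCLM (J 1 0) (J 1 1)))
        (h16 a b y, y) ∧
      J.det = 0 ∧
      Matrix.trace J = -b * Real.exp (-(b / y)) * (1 + (a - 1 / b) * y) ∧
      Module.End.HasEigenvalue (Matrix.mulVecLin J) 0 ∧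
      Module.End.HasEigenvalue (Matrix.mulVecLin J)
        (-b * Real.exp (-(b / y)) * (1 + (a - 1 / b) * y)) := by
  set D := a * exp (-(b / y)) + (1 + a * y) * (exp (-(b / y)) * (b / y ^ 2))
  set p : ℝ × ℝ := (h16 a b y, y)
  have hφ : HasFDerivAt (fun q : ℝ × ℝ => q.1 - h16 a b q.2) (rowCLM 1 (-D)) p :=
    hasFDerivAt_fst_sub_comp_snd (hasDerivAt_h16 a b hy.ne')
  have hφp : p.1 - h16 a b p.2 = 0 := sub_self _
  have hF : HasFDerivAt (F16 a b)
      (((p.2 * p.1) • rowCLM 1 (-D)).prod (p.2 ^ 2 • rowCLM 1 (-D))) p :=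
    ((HasFDerivAt.mul_of_right_eq_zero (by fun_prop) hφ hφp).prodMk
      (HasFDerivAt.mul_of_right_eq_zero (by fun_prop) hφ hφp))
  have htrace : y * h16 a b y - y ^ 2 * D = -b * exp (-(b / y)) * (1 + (a - 1 / b) * y) :=
    mul_h16_sub_sq_mul_deriv hb.ne' hy.ne'
  set J := Matrix.vecMulVec ![y * h16 a b y, y ^ 2] ![1, -D]
  have hJtrace : J.trace = -b * exp (-(b / y)) * (1 + (a - 1 / b) * y) := by
    rw [← htrace, Matrix.trace_vecMulVec]
    simp [dotProduct, Fin.sum_univ_two]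
    ring
  have hJdet : J.det = 0 := Matrix.det_vecMulVec _ _
  refine ⟨by simp [F16, p], J, ?_, hJdet, hJtrace,
    Matrix.hasEigenvalue_zero_of_det_eq_zero hJdet, ?_⟩
  · simpa [J, smul_rowCLM, Matrix.vecMulVec_apply, p] using hF
  · rw [← hJtrace, Matrix.trace_vecMulVec, dotProduct_comm]
    exact Matrix.hasEigenvalue_vecMulVec (by simp [funext_iff, Fin.forall_fin_two, hy.ne']) _

/-- Every point `(h(y), y)` of the critical manifold is a zero of the layer problem
`F16`, and the Jacobian matrix of `F16` there has determinant `0` and trace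
`−b·e^{−b/y}·(1 + (a − 1/b)·y)`; in particular its eigenvalues are `0` and this trace. -/
theorem stmt16 (a b : ℝ) (hb : 0 < b) (y : ℝ) (hy : 0 < y) (hay : 0 < 1 + a * y) :
    F16 a b (h16 a b y, y) = 0 ∧
    ∃ J : Matrix (Fin 2) (Fin 2) ℝ,
      HasFDerivAt (F16 a b)
        ((rowCLM (J 0 0) (J 0 1)).prod (rowCLM (J 1 0) (J 1 1)))
        (h16 a b y, y) ∧
      J.det = 0 ∧
      Matrix.trace J = -b * Real.exp (-(b / y)) * (1 + (a - 1 / b) * y) ∧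
      Module.End.HasEigenvalue (Matrix.mulVecLin J) 0 ∧
      Module.End.HasEigenvalue (Matrix.mulVecLin J)
        (-b * Real.exp (-(b / y)) * (1 + (a - 1 / b) * y)) :=
  stmt16_general a b hb y hy
end
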